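/- arXiv:2310.08563 — 2 statements merged into one kernel-verified Lean document; each statement's English description precedes it below -/
import Mathlib

section
/- Let r and d be positive integers and let S ⊂ ℝ^d be a finite set with at least 3((d+1)(r-1)+1) - 1 points. Then the Tverberg r-partition graph G_T[S,r] is connected. -/
/-!
A Tverberg partition into `r` parts is the same as a colouring `c : ℝ^d → Fin r` whose colour
classes have a common point in their convex hulls. Through Sarkaria's lift of coloured points to
`ℝ^(r-1) ⊗ ℝ^(d+1)`, Carathéodory's theorem shows that every Tverberg colouring is already Tverberg
on a *core* of at most `Tv(d, r)` points, and Bárány's colourful Carathéodory theorem gives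
Tverberg's theorem. Recolouring a point outside a core is an edge of the graph, so colourings that
agree on a core of one of them are connected. For cores `K` and `L` of two colourings,
`3 Tv(d, r) - 1` points leave room for `Tv(d, r)` points `C` avoiding `K` and meeting `L` at most
once; a Tverberg colouring of `C` then connects the two colourings in three such moves.
-/

open Finset

noncomputable instance (d : ℕ) : DecidableEq (EuclideanSpace ℝ (Fin d)) :=
  Classical.decEq _

/-- The parts of a partition after removing the point `x`, discarding empty parts. -/
def eraseParts {α : Type*} [DecidableEq α] (parts : Finset (Finset α)) (x : α) :
    Finset (Finset α) :=
  (parts.image fun t => t.erase x).filter fun t => t.Nonempty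

/-- A Tverberg partition: the convex hulls of all the parts have a common point. -/
def Finpartition.IsTverberg {d : ℕ} {S : Finset (EuclideanSpace ℝ (Fin d))}
    (P : Finpartition S) : Prop :=
  (⋂ t ∈ P.parts, convexHull ℝ (t : Set (EuclideanSpace ℝ (Fin d)))).Nonempty

/-- Vertices of the Tverberg `r`-partition graph of `S`: Tverberg partitions of `S`
into `r` parts. -/
def TverbergPartition {d : ℕ} (S : Finset (EuclideanSpace ℝ (Fin d))) (r : ℕ) :=
  {P : Finpartition S // P.parts.card = r ∧ P.IsTverberg}

/-- The Tverberg `r`-partition graph of `S`: two Tverberg partitions are adjacent iff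
there is exactly one point `x ∈ S` whose removal from its part in each partition yields
the same partition of `S \ {x}`. -/
def tverbergGraph {d : ℕ} (S : Finset (EuclideanSpace ℝ (Fin d))) (r : ℕ) :
    SimpleGraph (TverbergPartition S r) where
  Adj P Q := P ≠ Q ∧ ∃! x, x ∈ S ∧ eraseParts P.1.parts x = eraseParts Q.1.parts x
  symm := by
    constructor
    rintro P Q ⟨hne, x, ⟨hx1, hx2⟩, hu⟩
    exact ⟨hne.symm, x, ⟨hx1, hx2.symm⟩, fun y hy => hu y ⟨hy.1, hy.2.symm⟩⟩
  loopless := by constructor; rintro P ⟨h, -⟩; exact h rfl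

open Module

lemma exists_subset_card_eq_card_inter_le_one {α : Type*} [DecidableEq α] {A L : Finset α}
    {n : ℕ} (hA : n ≤ #A) (hAL : n ≤ #(A \ L) + 1) : ∃ C ⊆ A, #C = n ∧ #(C ∩ L) ≤ 1 := by
  obtain ⟨B, hBAL, hB⟩ := exists_subset_card_eq (min_le_right n #(A \ L))
  obtain ⟨C, hBC, hCA, hC⟩ :=
    exists_subsuperset_card_eq (hBAL.trans sdiff_subset) (hB ▸ min_le_left _ _) hA
  refine ⟨C, hCA, hC, ?_⟩
  calc #(C ∩ L) ≤ #(C \ B) := card_le_card fun x hx => mem_sdiff.2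
        ⟨(mem_inter.1 hx).1, fun hxB => (mem_sdiff.1 (hBAL hxB)).2 (mem_inter.1 hx).2⟩
    _ = n - min n #(A \ L) := by rw [card_sdiff_of_subset hBC, hC, hB]
    _ ≤ 1 := by omega

section Coloring

variable {α ι : Type*} [DecidableEq ι]

def colorClass (S : Finset α) (c : α → ι) (i : ι) : Finset α := {x ∈ S | c x = i}

@[simp]
lemma mem_colorClass {S : Finset α} {c : α → ι} {i : ι} {x : α} :
    x ∈ colorClass S c i ↔ x ∈ S ∧ c x = i :=
  mem_filter

lemma colorClass_congr {S : Finset α} {c c' : α → ι} (h : Set.EqOn c c' S) :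
    colorClass S c = colorClass S c' := by
  ext i x
  simp only [mem_colorClass]
  exact ⟨fun ⟨hx, hi⟩ => ⟨hx, h hx ▸ hi⟩, fun ⟨hx, hi⟩ => ⟨hx, (h hx).symm ▸ hi⟩⟩

lemma colorClass_comp_perm (S : Finset α) (c : α → ι) (π : Equiv.Perm ι) (i : ι) :
    colorClass S (π ∘ c) i = colorClass S c (π.symm i) := by
  ext x
  simp [Equiv.eq_symm_apply]

lemma erase_colorClass [DecidableEq α] (S : Finset α) (c : α → ι) (x : α) (i : ι) :
    (colorClass S c i).erase x = colorClass (S.erase x) c i := by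
  ext y
  simp [and_assoc]

lemma exists_perm_eqOn_of_card_le_one {D : Finset α} (hD : #D ≤ 1) (f g : α → ι) :
    ∃ π : Equiv.Perm ι, Set.EqOn (π ∘ f) g D := by
  rcases D.eq_empty_or_nonempty with rfl | ⟨w, hw⟩
  · exact ⟨1, by simp⟩
  · refine ⟨Equiv.swap (f w) (g w), fun x hx => ?_⟩
    rw [card_le_one.1 hD x hx w hw]
    exact Equiv.swap_apply_left _ _

variable [Fintype ι] [DecidableEq α]

namespace Finpartition

def ofColoring (S : Finset α) (c : α → ι) : Finpartition S :=
  ofErase (univ.image (colorClass S c))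
    (by
      rw [supIndep_iff_pairwiseDisjoint]
      intro _ ha _ hb hij
      obtain ⟨i, -, rfl⟩ := mem_image.1 ha
      obtain ⟨j, -, rfl⟩ := mem_image.1 hb
      refine disjoint_left.2 fun x hi hj => hij ?_
      rw [(mem_colorClass.1 hi).2.symm.trans (mem_colorClass.1 hj).2])
    (by
      refine le_antisymm (Finset.sup_le ?_) fun x hx => ?_
      · intro _ ht
        obtain ⟨i, -, rfl⟩ := mem_image.1 ht
        exact filter_subset _ _
      · exact mem_sup.2 ⟨_, mem_image_of_mem _ (mem_univ (c x)),
          mem_colorClass.2 ⟨hx, rfl⟩⟩)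

variable {S : Finset α} {c c' : α → ι}

lemma mem_ofColoring_parts {t : Finset α} :
    t ∈ (ofColoring S c).parts ↔ t.Nonempty ∧ ∃ i, colorClass S c i = t := by
  simp [ofColoring, nonempty_iff_ne_empty]

lemma colorClass_mem_ofColoring_parts {i : ι} (h : (colorClass S c i).Nonempty) :
    colorClass S c i ∈ (ofColoring S c).parts :=
  mem_ofColoring_parts.2 ⟨h, i, rfl⟩

lemma part_ofColoring {x : α} (hx : x ∈ S) :
    (ofColoring S c).part x = colorClass S c (c x) :=
  part_eq_of_mem _ (colorClass_mem_ofColoring_parts ⟨x, mem_colorClass.2 ⟨hx, rfl⟩⟩)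
    (mem_colorClass.2 ⟨hx, rfl⟩)

lemma part_ofColoring_eq_iff {x y : α} (hx : x ∈ S) (hy : y ∈ S) :
    (ofColoring S c).part x = (ofColoring S c).part y ↔ c x = c y := by
  rw [part_ofColoring hx, part_ofColoring hy]
  refine ⟨fun h => ?_, fun h => h ▸ rfl⟩
  have : x ∈ colorClass S c (c y) := h ▸ mem_colorClass.2 ⟨hx, rfl⟩
  exact (mem_colorClass.1 this).2

lemma card_ofColoring_parts (h : ∀ i, (colorClass S c i).Nonempty) :
    (ofColoring S c).parts.card = Fintype.card ι := by
  have hparts : (ofColoring S c).parts = univ.image (colorClass S c) := by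
    ext t
    simp only [mem_ofColoring_parts, mem_image, mem_univ, true_and,
      and_iff_right_iff_imp]
    rintro ⟨i, rfl⟩
    exact h i
  rw [hparts, card_image_of_injective, card_univ]
  intro i j hij
  obtain ⟨x, hx⟩ := h i
  exact (mem_colorClass.1 hx).2.symm.trans (mem_colorClass.1 (hij ▸ hx : x ∈ _)).2

lemma ofColoring_congr (h : Set.EqOn c c' S) : ofColoring S c = ofColoring S c' := by
  ext t
  simp only [mem_ofColoring_parts, colorClass_congr h]

lemma eraseParts_ofColoring (x : α) :
    eraseParts (ofColoring S c).parts x = (ofColoring (S.erase x) c).parts := by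
  ext t
  simp only [eraseParts, mem_filter, mem_image, mem_ofColoring_parts]
  constructor
  · rintro ⟨⟨_, ⟨-, i, rfl⟩, rfl⟩, ht⟩
    exact ⟨ht, i, (erase_colorClass S c x i).symm⟩
  · rintro ⟨ht, i, rfl⟩
    refine ⟨⟨colorClass S c i, ⟨?_, i, rfl⟩, erase_colorClass S c x i⟩, ht⟩
    obtain ⟨y, hy⟩ := ht
    exact ⟨y, by rw [← erase_colorClass] at hy; exact mem_of_mem_erase hy⟩

lemma ofColoring_update_ne {T : Finset α} {x u : α} {j : ι} (hx : x ∈ T) (hu : u ∈ T)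
    (hux : u ≠ x) (hj : c x ≠ j) (hcu : c u = c x ∨ c u = j) :
    ofColoring T (Function.update c x j) ≠ ofColoring T c := by
  intro h
  have hsame := part_ofColoring_eq_iff (c := Function.update c x j) hx hu
  rw [h, part_ofColoring_eq_iff hx hu, Function.update_self, Function.update_of_ne hux] at hsame
  rcases hcu with hcu | hcu
  · exact hj (hsame.1 hcu.symm |>.trans hcu).symm
  · exact hj (hsame.2 hcu.symm |>.trans hcu)

lemma exists_ofColoring_eq [Nonempty ι] (P : Finpartition S)
    (hP : P.parts.card = Fintype.card ι) :
    ∃ c : α → ι, ofColoring S c = P ∧ ∀ i, colorClass S c i ∈ P.parts := by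
  classical
  let e : P.parts ≃ ι := Fintype.equivOfCardEq (by rw [Fintype.card_coe, hP])
  let c : α → ι := fun x => if hx : x ∈ S then e ⟨P.part x, P.part_mem.2 hx⟩
    else Classical.arbitrary ι
  have hc : ∀ i, colorClass S c i = e.symm i := by
    intro i
    ext x
    simp only [mem_colorClass, c]
    constructor
    · rintro ⟨hx, hi⟩
      rw [dif_pos hx, ← Equiv.eq_symm_apply] at hi
      exact hi ▸ P.mem_part hx
    · intro hx
      have hxS : x ∈ S := P.le (e.symm i).2 hx
      refine ⟨hxS, ?_⟩
      rw [dif_pos hxS, ← Equiv.eq_symm_apply]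
      exact Subtype.ext (P.part_eq_of_mem (e.symm i).2 hx)
  refine ⟨c, ?_, fun i => hc i ▸ (e.symm i).2⟩
  ext t
  simp only [mem_ofColoring_parts, hc]
  refine ⟨fun ⟨_, i, hi⟩ => hi ▸ (e.symm i).2, fun ht => ⟨P.nonempty_of_mem_parts ht, ?_⟩⟩
  exact ⟨e ⟨t, ht⟩, by simp⟩

end Finpartition

end Coloring

section TverbergColoring

variable {E ι : Type*} [AddCommGroup E] [Module ℝ E] [DecidableEq ι]

def IsTverbergColoring (C : Finset E) (c : E → ι) : Prop :=
  ∃ p, ∀ i, p ∈ convexHull ℝ (colorClass C c i : Set E)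

variable {C S : Finset E} {c c' : E → ι}

lemma IsTverbergColoring.nonempty (h : IsTverbergColoring C c) (i : ι) :
    (colorClass C c i).Nonempty := by
  obtain ⟨p, hp⟩ := h
  by_contra hi
  rw [not_nonempty_iff_eq_empty] at hi
  simpa [hi] using hp i

lemma IsTverbergColoring.mono (h : IsTverbergColoring C c) (hCS : C ⊆ S) :
    IsTverbergColoring S c := by
  obtain ⟨p, hp⟩ := h
  refine ⟨p, fun i => convexHull_mono ?_ (hp i)⟩
  exact coe_subset.2 (filter_subset_filter _ hCS)

lemma IsTverbergColoring.congr (h : IsTverbergColoring C c) (hcc' : Set.EqOn c c' C) :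
    IsTverbergColoring C c' := by
  rwa [IsTverbergColoring, ← colorClass_congr hcc']

lemma IsTverbergColoring.comp_perm (h : IsTverbergColoring C c) (π : Equiv.Perm ι) :
    IsTverbergColoring C (π ∘ c) := by
  obtain ⟨p, hp⟩ := h
  exact ⟨p, fun i => by rw [colorClass_comp_perm]; exact hp _⟩

end TverbergColoring

section Caratheodory

theorem exists_subset_card_le_finrank_succ_of_mem_convexHull_image {𝕜 V α : Type*} [Field 𝕜]
    [LinearOrder 𝕜] [IsStrictOrderedRing 𝕜] [AddCommGroup V] [Module 𝕜 V] [FiniteDimensional 𝕜 V]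
    {F : α → V} {C : Finset α} {x : V} (hx : x ∈ convexHull 𝕜 (F '' C)) :
    ∃ K ⊆ C, #K ≤ finrank 𝕜 V + 1 ∧ x ∈ convexHull 𝕜 (F '' K) := by
  rw [convexHull_eq_union] at hx
  simp only [Set.mem_iUnion] at hx
  obtain ⟨Y, hYC, hYai, hxY⟩ := hx
  obtain ⟨K, hKC, hKinj, hKY⟩ := Set.SurjOn.exists_subset_injOn_image_eq (hYC : Set.SurjOn F C Y)
  lift K to Finset α using C.finite_toSet.subset hKC
  refine ⟨K, coe_subset.1 hKC, ?_, hKY ▸ hxY⟩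
  calc #K ≤ #Y := card_le_card_of_injOn F (fun a ha => hKY ▸ Set.mem_image_of_mem F ha) hKinj
    _ ≤ finrank 𝕜 (vectorSpan 𝕜 (Set.range ((↑) : Y → V))) + 1 := by
      simpa using hYai.card_le_finrank_succ
    _ ≤ finrank 𝕜 V + 1 := Nat.add_le_add_right (Submodule.finrank_le _) 1

lemma AffineIndependent.linearIndependent_of_apply_eq {k V ι : Type*} [Field k] [AddCommGroup V]
    [Module k V] {p : ι → V} (hp : AffineIndependent k p) (φ : V →ₗ[k] k) {a : k} (ha : a ≠ 0)
    (hφ : ∀ i, φ (p i) = a) : LinearIndependent k p := by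
  rw [linearIndependent_iff']
  intro s g hg
  refine hp.eq_zero_of_sum_eq_zero ?_ hg
  have := congrArg φ hg
  simp only [map_sum, map_smul, hφ, smul_eq_mul, map_zero, ← sum_mul] at this
  exact (mul_eq_zero.1 this).resolve_right ha

end Caratheodory

section ColorfulCaratheodory

open scoped RealInnerProductSpace

variable {V : Type*} [NormedAddCommGroup V] [InnerProductSpace ℝ V]

lemma exists_mem_segment_norm_lt {z y : V} (h : ⟪z, y⟫ < ‖z‖ ^ 2) :
    ∃ u ∈ segment ℝ z y, ‖u‖ < ‖z‖ := by
  set δ := ‖z‖ ^ 2 - ⟪z, y⟫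
  have hδ : 0 < δ := sub_pos.2 h
  have hB : 0 < ‖y - z‖ ^ 2 := by
    refine pow_pos (norm_pos_iff.2 fun hyz => h.ne ?_) 2
    rw [sub_eq_zero.1 hyz, real_inner_self_eq_norm_sq]
  set t := min 1 (δ / ‖y - z‖ ^ 2)
  have ht : 0 < t := lt_min one_pos (div_pos hδ hB)
  have htB : t * ‖y - z‖ ^ 2 ≤ δ := (le_div_iff₀ hB).1 (min_le_right _ _)
  refine ⟨z + t • (y - z), segment_eq_image' ℝ z y ▸ ⟨t, ⟨ht.le, min_le_left _ _⟩, rfl⟩, ?_⟩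
  have hsq : ‖z + t • (y - z)‖ ^ 2 = ‖z‖ ^ 2 - 2 * t * δ + t * (t * ‖y - z‖ ^ 2) := by
    rw [norm_add_sq_real, real_inner_smul_right, norm_smul, inner_sub_right,
      real_inner_self_eq_norm_sq, Real.norm_of_nonneg ht.le]
    ring
  nlinarith [norm_nonneg (z + t • (y - z)), norm_nonneg z, mul_le_mul_of_nonneg_left htB ht.le]

/-- The points of a Carathéodory representation of `z` lie on the hyperplane
`⟪z, ·⟫ = ‖z‖ ^ 2`, which avoids `0`, so they are even linearly independent. -/
lemma exists_finset_card_le_finrank_of_mem_convexHull [FiniteDimensional ℝ V] {T : Set V} {z : V}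
    (hz : z ≠ 0) (hzT : z ∈ convexHull ℝ T) (hT : ∀ t ∈ T, ‖z‖ ^ 2 ≤ ⟪z, t⟫) :
    ∃ Y : Finset V, ↑Y ⊆ T ∧ #Y ≤ finrank ℝ V ∧ z ∈ convexHull ℝ (Y : Set V) := by
  classical
  obtain ⟨ι, _, p, w, hpT, hai, hw0, hw1, hwz⟩ := eq_pos_convex_span_of_mem_convexHull hzT
  have hface : ∀ i, ⟪z, p i⟫ = ‖z‖ ^ 2 := by
    have hsum : ∑ i, w i * (⟪z, p i⟫ - ‖z‖ ^ 2) = 0 := by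
      simp only [mul_sub, sum_sub_distrib, ← sum_mul, hw1, one_mul]
      rw [← real_inner_self_eq_norm_sq, ← hwz, inner_sum]
      simp [real_inner_smul_right]
    have hterm := (sum_eq_zero_iff_of_nonneg fun i _ =>
      mul_nonneg (hw0 i).le (sub_nonneg.2 (hT _ (hpT ⟨i, rfl⟩)))).1 hsum
    exact fun i => sub_eq_zero.1 ((mul_eq_zero.1 (hterm i (mem_univ i))).resolve_left
      (hw0 i).ne')
  have hli := hai.linearIndependent_of_apply_eq (innerₗ V z) (pow_pos (norm_pos_iff.2 hz) 2).ne'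
    (by simpa using hface)
  refine ⟨univ.image p, ?_, card_image_le.trans hli.fintype_card_le_finrank, ?_⟩
  · rwa [coe_image, coe_univ, Set.image_univ]
  · exact mem_convexHull_of_exists_fintype w p (fun i => (hw0 i).le) hw1
      (fun i => mem_image_of_mem p (mem_univ i)) hwz

/-- Bárány's proof: if the point `z` of least norm in all colourful hulls is not `0`, it is a
combination of at most `finrank ℝ V` points on the hyperplane `⟪z, ·⟫ = ‖z‖ ^ 2`, so some colour is
superfluous; swapping its point for one with `⟪z, y⟫ ≤ 0` gives a colourful hull closer to `0`. -/
theorem InnerProductSpace.colorful_caratheodory [FiniteDimensional ℝ V] {ι : Type*} [Fintype ι]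
    (A : ι → Finset V) (hA : ∀ i, (0 : V) ∈ convexHull ℝ (A i : Set V))
    (hι : finrank ℝ V < Fintype.card ι) :
    ∃ f : ι → V, (∀ i, f i ∈ A i) ∧ (0 : V) ∈ convexHull ℝ (Set.range f) := by
  classical
  have hne : ∀ i, (A i).Nonempty := fun i =>
    nonempty_iff_ne_empty.2 fun h => by simpa [h] using hA i
  have : Nonempty ι := Fintype.card_pos_iff.1 (by omega)
  set U := ⋃ f ∈ Fintype.piFinset A, convexHull ℝ (Set.range f)
  have hU : IsCompact U := (Fintype.piFinset A).finite_toSet.isCompact_biUnion fun f _ =>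
    (Set.finite_range f).isCompact_convexHull (𝕜 := ℝ)
  obtain ⟨f₀, hf₀⟩ := Fintype.piFinset_nonempty.2 hne
  have hUne : U.Nonempty := ⟨f₀ (Classical.arbitrary ι),
    Set.mem_biUnion hf₀ (subset_convexHull ℝ _ (Set.mem_range_self _))⟩
  obtain ⟨z, hzU, hzmin⟩ := hU.exists_isMinOn hUne continuous_norm.continuousOn
  obtain ⟨f, hf, hzf⟩ := Set.mem_iUnion₂.1 hzU
  rcases eq_or_ne z 0 with rfl | hz
  · exact ⟨f, Fintype.mem_piFinset.1 hf, hzf⟩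
  exfalso
  have hsupport : ∀ g ∈ Fintype.piFinset A, z ∈ convexHull ℝ (Set.range g) →
      ∀ y ∈ convexHull ℝ (Set.range g), ‖z‖ ^ 2 ≤ ⟪z, y⟫ := fun g hg hzg y hy =>
    not_lt.1 fun hlt => by
      obtain ⟨u, hu, hlt'⟩ := exists_mem_segment_norm_lt hlt
      exact (hzmin (Set.mem_biUnion hg ((convex_convexHull ℝ _).segment_subset hzg hy hu))).not_gt
        hlt'
  obtain ⟨Y, hYf, hYcard, hzY⟩ := exists_finset_card_le_finrank_of_mem_convexHull hz hzf
    fun t ht => hsupport f hf hzf t (subset_convexHull ℝ _ ht)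
  obtain ⟨i₀, -, hi₀⟩ := exists_mem_notMem_of_card_lt_card
    (s := Y.image (Function.invFun f)) (t := univ)
    (by rw [card_univ]; exact card_image_le.trans_lt (hYcard.trans_lt hι))
  obtain ⟨y₀, hy₀, hzy₀⟩ := ((innerₗ V z).concaveOn convex_univ).exists_le_of_mem_convexHull
    (Set.subset_univ _) (hA i₀)
  set g := Function.update f i₀ y₀
  have hg : g ∈ Fintype.piFinset A := Fintype.mem_piFinset.2 fun i => by
    by_cases hi : i = i₀
    · subst hi; simpa [g] using hy₀
    · simpa [g, hi] using Fintype.mem_piFinset.1 hf i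
  have hYg : ↑Y ⊆ Set.range g := fun y hy => ⟨Function.invFun f y, by
    simp only [g]
    rw [Function.update_of_ne fun h => hi₀ (mem_image.2 ⟨y, hy, h⟩)]
    exact Function.invFun_eq (hYf hy)⟩
  have hzy₀' := hsupport g hg (convexHull_mono hYg hzY) y₀
    (subset_convexHull ℝ _ ⟨i₀, Function.update_self _ _ _⟩)
  have hz₂ : 0 < ‖z‖ ^ 2 := pow_pos (norm_pos_iff.2 hz) 2
  simp only [innerₗ_apply_apply, inner_zero_right] at hzy₀
  linarith

end ColorfulCaratheodory

theorem colorful_caratheodory {V : Type*} [AddCommGroup V] [Module ℝ V] [FiniteDimensional ℝ V]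
    {ι : Type*} [Fintype ι] (A : ι → Finset V) (hA : ∀ i, (0 : V) ∈ convexHull ℝ (A i : Set V))
    (hι : finrank ℝ V < Fintype.card ι) :
    ∃ f : ι → V, (∀ i, f i ∈ A i) ∧ (0 : V) ∈ convexHull ℝ (Set.range f) := by
  classical
  let e : V ≃ₗ[ℝ] EuclideanSpace ℝ (Fin (finrank ℝ V)) := LinearEquiv.ofFinrankEq _ _ (by simp)
  obtain ⟨f, hfA, hf0⟩ := InnerProductSpace.colorful_caratheodory (fun i => (A i).image e)
    (fun i => by
      rw [coe_image]
      exact e.toLinearMap.image_convexHull (A i : Set V) ▸ ⟨0, hA i, map_zero e⟩)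
    (by simpa using hι)
  refine ⟨e.symm ∘ f, fun i => ?_, ?_⟩
  · obtain ⟨a, ha, hfa⟩ := mem_image.1 (hfA i)
    simpa [← hfa] using ha
  · rw [Set.range_comp]
    exact e.symm.toLinearMap.image_convexHull (Set.range f) ▸ ⟨0, hf0, map_zero _⟩

section Sarkaria

variable {E : Type*} [AddCommGroup E] [Module ℝ E] {s : ℕ}

/-- The basis vectors of `ℝ^s` and minus their sum: `s + 1` vectors whose only linear relations
are the multiples of `∑ i, sarkariaVector i = 0`. -/
def sarkariaVector (i : Fin (s + 1)) (k : Fin s) : ℝ :=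
  (if i = k.castSucc then 1 else 0) - (if i = Fin.last s then 1 else 0)

lemma sum_sarkariaVector_smul {M : Type*} [AddCommGroup M] [Module ℝ M] (m : Fin (s + 1) → M)
    (k : Fin s) : ∑ i, sarkariaVector i k • m i = m k.castSucc - m (Fin.last s) := by
  simp [sarkariaVector, sub_smul, ite_smul, sum_sub_distrib]

/-- Sarkaria's lift `sarkariaVector i ⊗ (a, 1)`, with `ℝ^s ⊗ (E × ℝ)` realised as
`Fin s → E × ℝ`. -/
def sarkariaLift (i : Fin (s + 1)) (a : E) : Fin s → E × ℝ :=
  fun k => sarkariaVector i k • (a, 1)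

lemma sum_sarkariaLift (a : E) : ∑ i, sarkariaLift (s := s) i a = 0 := by
  funext k
  simpa [Finset.sum_apply, sarkariaLift] using
    sum_sarkariaVector_smul (fun _ => ((a, 1) : E × ℝ)) k

lemma finrank_fin_fun_prod [FiniteDimensional ℝ E] :
    finrank ℝ (Fin s → E × ℝ) = (finrank ℝ E + 1) * s := by
  simp [Module.finrank_pi_fintype, Module.finrank_prod, mul_comm]

lemma sum_smul_sarkariaLift {t : Finset E} {w : E → ℝ} (hw : ∑ x ∈ t, w x = 1)
    (i : Fin (s + 1)) : ∑ x ∈ t, w x • sarkariaLift i x = sarkariaLift i (∑ x ∈ t, w x • x) := by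
  funext k
  simp only [Finset.sum_apply, Pi.smul_apply, sarkariaLift, smul_comm (w _), ← smul_sum]
  congr 1
  ext <;> simp [Prod.fst_sum, Prod.snd_sum, hw]

/-- The reverse half of Sarkaria's lemma: a convex combination of lifted points that vanishes puts
the same total weight `1 / (s + 1)` on every colour, and then the barycentres of the colour
classes coincide. -/
theorem exists_forall_mem_convexHull_of_sum_smul_sarkariaLift_eq_zero {ι : Type*}
    (t : Finset ι) (p : ι → E) (col : ι → Fin (s + 1)) (w : ι → ℝ) (hw₀ : ∀ i ∈ t, 0 ≤ w i)
    (hw₁ : ∑ i ∈ t, w i = 1) (h : ∑ i ∈ t, w i • sarkariaLift (col i) (p i) = 0) :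
    ∃ q, ∀ j, q ∈ convexHull ℝ (p '' ({i ∈ t | col i = j} : Finset ι)) := by
  set M : Fin (s + 1) → E × ℝ := fun j => ∑ i ∈ t with col i = j, w i • (p i, 1)
  have hM : ∀ j, M j = M (Fin.last s) := by
    have hk : ∀ k : Fin s, M k.castSucc - M (Fin.last s) = 0 := fun k => by
      rw [← sum_sarkariaVector_smul, show (0 : E × ℝ) = (0 : Fin s → E × ℝ) k from rfl, ← h,
        Finset.sum_apply, ← sum_fiberwise t col]
      refine sum_congr rfl fun j _ => ?_
      rw [smul_sum]
      refine sum_congr rfl fun i hi => ?_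
      rw [(mem_filter.1 hi).2, Pi.smul_apply, sarkariaLift, smul_comm]
    intro j
    induction j using Fin.lastCases with
    | last => rfl
    | cast k => exact sub_eq_zero.1 (hk k)
  have hmass : ∀ j, (M j).2 = ∑ i ∈ t with col i = j, w i := fun j => by simp [M, Prod.snd_sum]
  have hpos : ∀ j, 0 < ∑ i ∈ t with col i = j, w i := by
    have hsum : ∑ j, (M j).2 = 1 := by simp only [hmass, sum_fiberwise, hw₁]
    simp only [hM _, sum_const, card_univ, Fintype.card_fin, nsmul_eq_mul] at hsum
    intro j
    rw [← hmass, hM]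
    nlinarith
  refine ⟨(M (Fin.last s)).2⁻¹ • (M (Fin.last s)).1, fun j => ?_⟩
  have hq : {i ∈ t | col i = j}.centerMass w p = (M (Fin.last s)).2⁻¹ • (M (Fin.last s)).1 := by
    rw [← hM j, hmass, centerMass]
    simp [M, Prod.fst_sum]
  rw [← hq]
  exact centerMass_mem_convexHull _ (fun i hi => hw₀ i (mem_filter.1 hi).1) (hpos j)
    fun i hi => Set.mem_image_of_mem p hi

end Sarkaria

section Tverberg

variable {E : Type*} [AddCommGroup E] [Module ℝ E] {s : ℕ} {C : Finset E} {c : E → Fin (s + 1)}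

theorem isTverbergColoring_iff_zero_mem_convexHull :
    IsTverbergColoring C c ↔
      (0 : Fin s → E × ℝ) ∈ convexHull ℝ ((fun x => sarkariaLift (c x) x) '' C) := by
  constructor
  · rintro ⟨p, hp⟩
    choose w hw₀ hw₁ hwp using fun j => mem_convexHull'.1 (hp j)
    have hmem : ∀ j, sarkariaLift j p ∈ convexHull ℝ ((fun x => sarkariaLift (c x) x) '' C) := by
      intro j
      rw [← hwp j, ← sum_smul_sarkariaLift (hw₁ j)]
      refine (convex_convexHull ℝ _).sum_mem (hw₀ j) (hw₁ j) fun x hx => subset_convexHull ℝ _ ?_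
      obtain ⟨hxC, rfl⟩ := mem_colorClass.1 hx
      exact Set.mem_image_of_mem _ hxC
    have := (convex_convexHull ℝ _).sum_mem (t := univ) (w := fun _ => (s + 1 : ℝ)⁻¹)
      (fun _ _ => by positivity) (by simp [field]) fun j _ => hmem j
    rwa [← smul_sum, sum_sarkariaLift, smul_zero] at this
  · intro h
    obtain ⟨ι, _, w, z, hw₀, hw₁, hz, hwz⟩ := mem_convexHull_iff_exists_fintype.1 h
    choose x hxC hxz using hz
    obtain ⟨q, hq⟩ := exists_forall_mem_convexHull_of_sum_smul_sarkariaLift_eq_zero univ x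
      (c ∘ x) w (fun i _ => hw₀ i) hw₁ (by simpa [hxz] using hwz)
    refine ⟨q, fun j => convexHull_mono ?_ (hq j)⟩
    rintro _ ⟨i, hi, rfl⟩
    exact mem_colorClass.2 ⟨hxC i, (mem_filter.1 hi).2⟩

/-- The lifts of a point in all colours average to `0`, so the colourful Carathéodory theorem
selects one colour per point with `0` in the convex hull of the selected lifts. -/
theorem exists_isTverbergColoring [FiniteDimensional ℝ E] (hC : (finrank ℝ E + 1) * s < #C) :
    ∃ c : E → Fin (s + 1), IsTverbergColoring C c := by
  classical
  obtain ⟨f, hfA, hf₀⟩ := colorful_caratheodory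
    (fun a : C => univ.image fun i => sarkariaLift (s := s) i (a : E)) (fun a => by
      refine mem_convexHull_of_exists_fintype (fun _ => (s + 1 : ℝ)⁻¹)
        (fun i => sarkariaLift i (a : E)) (fun _ => by positivity) (by simp [field])
        (fun i => by simp) ?_
      rw [← smul_sum, sum_sarkariaLift, smul_zero])
    (by rwa [finrank_fin_fun_prod, Fintype.card_coe])
  choose σ hσ using fun a => mem_image.1 (hfA a)
  refine ⟨fun x => if hx : x ∈ C then σ ⟨x, hx⟩ else 0,
    isTverbergColoring_iff_zero_mem_convexHull.2 ?_⟩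
  convert hf₀ using 2
  ext y
  simp only [Set.mem_image, Set.mem_range, mem_coe]
  constructor
  · rintro ⟨x, hx, rfl⟩
    exact ⟨⟨x, hx⟩, by simp [hx, (hσ _).2]⟩
  · rintro ⟨a, rfl⟩
    exact ⟨a, a.2, by simp [(hσ _).2]⟩

theorem IsTverbergColoring.exists_subset_card_le [FiniteDimensional ℝ E]
    (h : IsTverbergColoring C c) :
    ∃ K ⊆ C, #K ≤ (finrank ℝ E + 1) * s + 1 ∧ IsTverbergColoring K c := by
  have hlift := isTverbergColoring_iff_zero_mem_convexHull.1 h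
  obtain ⟨K, hKC, hK, hKlift⟩ := exists_subset_card_le_finrank_succ_of_mem_convexHull_image hlift
  rw [finrank_fin_fun_prod] at hK
  exact ⟨K, hKC, hK, isTverbergColoring_iff_zero_mem_convexHull.2 hKlift⟩

end Tverberg

section Graph

variable {d r : ℕ} {S C : Finset (EuclideanSpace ℝ (Fin d))}
  {c c' : EuclideanSpace ℝ (Fin d) → Fin r}

lemma Finpartition.isTverberg_ofColoring (h : IsTverbergColoring S c) :
    (Finpartition.ofColoring S c).IsTverberg := by
  obtain ⟨p, hp⟩ := h
  refine ⟨p, Set.mem_iInter₂.2 fun t ht => ?_⟩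
  obtain ⟨-, i, rfl⟩ := Finpartition.mem_ofColoring_parts.1 ht
  exact hp i

namespace TverbergPartition

noncomputable def ofColoring (c : EuclideanSpace ℝ (Fin d) → Fin r) (h : IsTverbergColoring S c) :
    TverbergPartition S r :=
  ⟨Finpartition.ofColoring S c, by rw [Finpartition.card_ofColoring_parts h.nonempty,
    Fintype.card_fin], Finpartition.isTverberg_ofColoring h⟩

lemma exists_eq_ofColoring (hr : 0 < r) (P : TverbergPartition S r) :
    ∃ c h, ofColoring c h = P := by
  have : Nonempty (Fin r) := ⟨⟨0, hr⟩⟩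
  obtain ⟨c, hcP, hc⟩ := Finpartition.exists_ofColoring_eq P.1 (by rw [P.2.1, Fintype.card_fin])
  obtain ⟨p, hp⟩ := P.2.2
  exact ⟨c, ⟨p, fun i => Set.mem_iInter₂.1 hp _ (hc i)⟩, Subtype.ext hcP⟩

end TverbergPartition

open TverbergPartition

/-- Recolouring a point outside a Tverberg core is a single edge: the core supplies, besides
`x`, points of both the old and the new colour of `x`, which tell the two partitions apart
even after deleting any point other than `x`. -/
theorem tverbergGraph_adj_ofColoring_update (hCS : C ⊆ S) (hC : IsTverbergColoring C c)
    {x : EuclideanSpace ℝ (Fin d)} (hxS : x ∈ S) (hxC : x ∉ C) {j : Fin r} (hj : c x ≠ j)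
    (h₁ : IsTverbergColoring S c) (h₂ : IsTverbergColoring S (Function.update c x j)) :
    (tverbergGraph S r).Adj (ofColoring c h₁) (ofColoring (Function.update c x j) h₂) := by
  obtain ⟨u, hu⟩ := hC.nonempty (c x)
  obtain ⟨v, hv⟩ := hC.nonempty j
  obtain ⟨huC, hu⟩ := mem_colorClass.1 hu
  obtain ⟨hvC, hv⟩ := mem_colorClass.1 hv
  have hux : u ≠ x := ne_of_mem_of_not_mem huC hxC
  have hvx : v ≠ x := ne_of_mem_of_not_mem hvC hxC
  refine ⟨fun h => ?_, x, ⟨hxS, ?_⟩, fun y ⟨hyS, hy⟩ => ?_⟩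
  · exact Finpartition.ofColoring_update_ne hxS (hCS huC) hux hj (.inl hu)
      (congrArg Subtype.val h).symm
  · show eraseParts (Finpartition.ofColoring S c).parts x = eraseParts (Finpartition.ofColoring
      S (Function.update c x j)).parts x
    rw [Finpartition.eraseParts_ofColoring, Finpartition.eraseParts_ofColoring,
      Finpartition.ofColoring_congr fun y hy =>
        (Function.update_of_ne (ne_of_mem_erase hy) _ _).symm]
  · by_contra hyx
    replace hy : Finpartition.ofColoring (S.erase y) c =
        Finpartition.ofColoring (S.erase y) (Function.update c x j) := by
      apply Finpartition.ext
      rw [← Finpartition.eraseParts_ofColoring, ← Finpartition.eraseParts_ofColoring]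
      exact hy
    have hxy : x ∈ S.erase y := mem_erase.2 ⟨Ne.symm hyx, hxS⟩
    by_cases huy : u = y
    · have hvy : v ≠ y := fun hvy => hj (hu.symm.trans (huy.trans hvy.symm ▸ hv))
      exact Finpartition.ofColoring_update_ne hxy (mem_erase.2 ⟨hvy, hCS hvC⟩) hvx hj (.inr hv)
        hy.symm
    · exact Finpartition.ofColoring_update_ne hxy (mem_erase.2 ⟨huy, hCS huC⟩) hux hj (.inl hu)
        hy.symm

theorem tverbergGraph_reachable_ofColoring (hCS : C ⊆ S) (hC : IsTverbergColoring C c)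
    (hcc' : Set.EqOn c c' C) :
    (tverbergGraph S r).Reachable (ofColoring c (hC.mono hCS))
      (ofColoring c' ((hC.congr hcc').mono hCS)) := by
  generalize hn : #{x ∈ S | c x ≠ c' x} = n
  induction n generalizing c with
  | zero =>
    have hS : Set.EqOn c c' S := fun x hx => by
      by_contra h
      have hmem : x ∈ ({y ∈ S | c y ≠ c' y} : Finset _) := mem_filter.2 ⟨hx, h⟩
      rw [card_eq_zero.1 hn] at hmem
      exact notMem_empty x hmem
    rw [(Subtype.ext (Finpartition.ofColoring_congr hS) :
      ofColoring c (hC.mono hCS) = ofColoring c' ((hC.congr hcc').mono hCS))]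
  | succ n ih =>
    obtain ⟨x, hx⟩ := card_pos.1 (by rw [hn]; exact Nat.succ_pos n)
    obtain ⟨hxS, hxc⟩ : x ∈ S ∧ c x ≠ c' x := mem_filter.1 hx
    have hxC : x ∉ C := fun h => hxc (hcc' h)
    have hc₁ : Set.EqOn c (Function.update c x (c' x)) C := fun y hy =>
      (Function.update_of_ne (ne_of_mem_of_not_mem hy hxC) _ _).symm
    have hcount : #{y ∈ S | Function.update c x (c' x) y ≠ c' y} = n := by
      rw [← Nat.add_right_cancel_iff, ← hn, ← card_erase_add_one hx]
      congr 2
      ext y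
      by_cases hyx : y = x <;> simp [hyx]
    exact (tverbergGraph_adj_ofColoring_update hCS hC hxS hxC hxc _ _).reachable.trans
      (ih (hC.congr hc₁) (hc₁.symm.trans hcc') hcount)

end Graph

open TverbergPartition in
/-- Given Tverberg cores `K` of `c` and `L` of `c'`, pick a set `C` of `Tv(d, s + 1)` points
avoiding `K` and meeting `L` in at most one point; a Tverberg colouring of `C`, relabelled to agree
with `c'` on that point, bridges `c` to `c'` in three moves, each fixing one of `K`, `C`, `L`. -/
theorem tverbergGraph_reachable_of_card_le {d s : ℕ} {S K L : Finset (EuclideanSpace ℝ (Fin d))}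
    {c c' : EuclideanSpace ℝ (Fin d) → Fin (s + 1)} (hS : 3 * ((d + 1) * s + 1) - 1 ≤ #S)
    (hKS : K ⊆ S) (hK : #K ≤ (d + 1) * s + 1) (hcK : IsTverbergColoring K c)
    (hLS : L ⊆ S) (hL : #L ≤ (d + 1) * s + 1) (hc'L : IsTverbergColoring L c') :
    (tverbergGraph S (s + 1)).Reachable (ofColoring c (hcK.mono hKS))
      (ofColoring c' (hc'L.mono hLS)) := by
  have hSK := le_card_sdiff K S
  have hSKL := le_card_sdiff L (S \ K)
  obtain ⟨C, hCSK, hC, hCL⟩ :=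
    exists_subset_card_eq_card_inter_le_one (A := S \ K) (L := L) (n := (d + 1) * s + 1)
      (by omega) (by omega)
  have hCS : C ⊆ S := hCSK.trans sdiff_subset
  obtain ⟨z, hz⟩ := exists_isTverbergColoring (C := C) (s := s)
    (by rw [finrank_euclideanSpace_fin]; omega)
  obtain ⟨π, hπ⟩ := exists_perm_eqOn_of_card_le_one hCL z c'
  have hm : IsTverbergColoring C (C.piecewise (π ∘ z) c) :=
    (hz.comp_perm π).congr fun x hx => (piecewise_eq_of_mem _ _ _ hx).symm
  have h₁ : Set.EqOn c (C.piecewise (π ∘ z) c) K := fun x hx =>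
    (piecewise_eq_of_notMem _ _ _ fun hxC => (mem_sdiff.1 (hCSK hxC)).2 hx).symm
  have h₂ : Set.EqOn (C.piecewise (π ∘ z) c) (C.piecewise (π ∘ z) c') C := fun x hx => by
    rw [piecewise_eq_of_mem _ _ _ hx, piecewise_eq_of_mem _ _ _ hx]
  have h₃ : Set.EqOn c' (C.piecewise (π ∘ z) c') L := fun x hx => by
    by_cases hxC : x ∈ C
    · rw [piecewise_eq_of_mem _ _ _ hxC]
      exact (hπ (mem_inter.2 ⟨hxC, hx⟩)).symm
    · exact (piecewise_eq_of_notMem _ _ _ hxC).symm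
  exact ((tverbergGraph_reachable_ofColoring hKS hcK h₁).trans
    (tverbergGraph_reachable_ofColoring hCS hm h₂)).trans
    (tverbergGraph_reachable_ofColoring hLS hc'L h₃).symm

theorem tverbergGraph_connected_general (d r : ℕ) (hr : 0 < r)
    (S : Finset (EuclideanSpace ℝ (Fin d)))
    (hS : 3 * ((d + 1) * (r - 1) + 1) - 1 ≤ S.card) :
    (tverbergGraph S r).Connected := by
  obtain ⟨s, rfl⟩ : ∃ s, r = s + 1 := ⟨r - 1, by omega⟩
  rw [Nat.add_sub_cancel] at hS
  obtain ⟨C, hCS, hC⟩ := exists_subset_card_eq (show (d + 1) * s + 1 ≤ #S by omega)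
  obtain ⟨c₀, hc₀⟩ := exists_isTverbergColoring (C := C) (s := s)
    (by rw [finrank_euclideanSpace_fin]; omega)
  refine (SimpleGraph.connected_iff _).2 ⟨fun P Q => ?_,
    ⟨TverbergPartition.ofColoring c₀ (hc₀.mono hCS)⟩⟩
  obtain ⟨c, hc, rfl⟩ := P.exists_eq_ofColoring hr
  obtain ⟨c', hc', rfl⟩ := Q.exists_eq_ofColoring hr
  obtain ⟨K, hKS, hK, hcK⟩ := hc.exists_subset_card_le
  obtain ⟨L, hLS, hL, hc'L⟩ := hc'.exists_subset_card_le
  rw [finrank_euclideanSpace_fin] at hK hL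
  exact tverbergGraph_reachable_of_card_le hS hKS hK hcK hLS hL hc'L

/-- If `S ⊂ ℝ^d` has at least `3((d+1)(r-1)+1) - 1` points, the Tverberg `r`-partition
graph of `S` is connected. -/
theorem tverbergGraph_connected (d r : ℕ) (hd : 0 < d) (hr : 0 < r)
    (S : Finset (EuclideanSpace ℝ (Fin d)))
    (hS : 3 * ((d + 1) * (r - 1) + 1) - 1 ≤ S.card) :
    (tverbergGraph S r).Connected :=
  tverbergGraph_connected_general d r hr S hS
end

section
/- Let S be a finite set with n elements and let r be a positive integer with r ≤ n/2. Then the number of edges of the r-partition graph G[S,r] satisfies |E(G[S,r])| = (1/2) · Σ_{k=0}^{r-1} C(n,k) · S₂(n - k, r - k) · (n - k)(r - 1), where C(n,k) is the binomial coefficient and S₂(x,y) denotes the number of partitions of a set of x elements into exactly y parts each of cardinality at least 2. -/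
open Finset

/-- The `r`-partition graph of a finite set `S`: vertices are the partitions of `S`
into exactly `r` nonempty parts, and two partitions are adjacent iff their partition
distance is `1`, i.e. there is exactly one element `x ∈ S` whose removal makes the two
partitions agree on `S \ {x}`. -/
def partitionGraph {α : Type*} [DecidableEq α] (S : Finset α) (r : ℕ) :
    SimpleGraph {P : Finpartition S // P.parts.card = r} where
  Adj P Q := P ≠ Q ∧ ∃! x, x ∈ S ∧ eraseParts P.1.parts x = eraseParts Q.1.parts x
  symm := by
    constructor
    rintro P Q ⟨hne, x, ⟨hx1, hx2⟩, hu⟩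
    exact ⟨hne.symm, x, ⟨hx1, hx2.symm⟩, fun y hy => hu y ⟨hy.1, hy.2.symm⟩⟩
  loopless := by constructor; rintro P ⟨h, -⟩; exact h rfl

/-- The 2-associated Stirling number of the second kind `S₂(x,y)`: the number of
partitions of a set of `x` elements into exactly `y` parts, each of cardinality at
least `2`. -/
noncomputable def assocStirling2 (x y : ℕ) : ℕ :=
  {P : Finpartition (Finset.range x) |
    P.parts.card = y ∧ ∀ t ∈ P.parts, 2 ≤ t.card}.ncard

/-!
Partitions with the same number of parts that agree off a point `x` differ by moving `x`: one of
them arises from the other by taking `x` out of its part, which must not be `{x}` (otherwise the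
number of parts drops), and putting it into one of the other `r - 1` parts; the moved point is then
determined by the pair. So a partition with `k` singleton parts has degree `(n - k)(r - 1)`.
Deleting the `k` singletons identifies the partitions whose singletons form a given `k`-set with
the partitions of the remaining `n - k` points into `r - k` parts of size at least `2`, so there
are `C(n, k) S₂(n - k, r - k)` vertices of degree `(n - k)(r - 1)`, and the handshake lemma gives
the count. Here `k ≤ r`, and the term `k = r` vanishes since `S₂(m, 0) = 0` for `m > 0`.
-/

theorem Finset.mem_ite_insert_erase {α : Type*} [DecidableEq α] {x a : α} {t T : Finset α} :
    a ∈ (if t = T then insert x t else t.erase x) ↔ a = x ∧ t = T ∨ a ≠ x ∧ a ∈ t := by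
  split_ifs with h <;> simp only [mem_insert, mem_erase, h] <;> tauto

section

variable {α β : Type*} [DecidableEq β] {s : Finset α} {f : α → β}

theorem Finset.filter_mem_image_of_injOn (hf : Set.InjOn f s) {t : Finset α} (ht : t ⊆ s) :
    s.filter (f · ∈ t.image f) = t := by
  ext a
  simp only [mem_filter, mem_image]
  refine ⟨fun ⟨ha, b, hb, hba⟩ => hf (ht hb) ha hba ▸ hb, fun ha => ⟨ht ha, a, ha, rfl⟩⟩

theorem Finset.image_filter_mem_of_subset {u : Finset β} (hu : u ⊆ s.image f) :
    (s.filter (f · ∈ u)).image f = u := by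
  ext b
  simp only [mem_image, mem_filter]
  refine ⟨fun ⟨a, ⟨_, hfa⟩, hab⟩ => hab ▸ hfa, fun hb => ?_⟩
  obtain ⟨a, ha, rfl⟩ := mem_image.1 (hu hb)
  exact ⟨a, ⟨ha, hb⟩, rfl⟩

end

namespace Finpartition

variable {α : Type*} [DecidableEq α] {S A T : Finset α} {P Q : Finpartition S} {x : α}

theorem parts_eq_image_part (P : Finpartition S) : P.parts = S.image P.part := by
  ext t
  refine ⟨fun ht => ?_, fun ht => ?_⟩
  · obtain ⟨a, ha⟩ := P.nonempty_of_mem_parts ht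
    exact mem_image.2 ⟨a, P.le ht ha, P.part_eq_of_mem ht ha⟩
  · obtain ⟨a, ha, rfl⟩ := mem_image.1 ht
    exact P.part_mem.2 ha

theorem ext_part (h : ∀ a ∈ S, P.part a = Q.part a) : P = Q :=
  Finpartition.ext <| by rw [parts_eq_image_part, parts_eq_image_part, image_congr h]

theorem eraseParts_parts (P : Finpartition S) (x : α) :
    eraseParts P.parts x = (S.erase x).image fun a => (P.part a).erase x := by
  ext u
  simp only [eraseParts, mem_filter, mem_image, mem_erase]
  constructor
  · rintro ⟨⟨t, ht, rfl⟩, a, ha⟩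
    obtain ⟨hax, hat⟩ := mem_erase.1 ha
    exact ⟨a, ⟨hax, P.le ht hat⟩, by rw [P.part_eq_of_mem ht hat]⟩
  · rintro ⟨a, ⟨hax, ha⟩, rfl⟩
    exact ⟨⟨P.part a, P.part_mem.2 ha, rfl⟩, a, mem_erase.2 ⟨hax, P.mem_part ha⟩⟩

theorem eraseParts_eq_iff :
    eraseParts P.parts x = eraseParts Q.parts x ↔
      ∀ a ∈ S, a ≠ x → (P.part a).erase x = (Q.part a).erase x := by
  refine ⟨fun h a ha hax => ?_, fun h => ?_⟩
  · have hmem : (P.part a).erase x ∈ eraseParts Q.parts x := by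
      rw [← h, eraseParts_parts]
      exact mem_image_of_mem _ (mem_erase.2 ⟨hax, ha⟩)
    rw [eraseParts_parts] at hmem
    obtain ⟨b, hb, hPQ⟩ := mem_image.1 hmem
    have haQ : a ∈ Q.part b := mem_of_mem_erase (hPQ ▸ mem_erase.2 ⟨hax, P.mem_part ha⟩)
    rw [← hPQ, Q.part_eq_of_mem (Q.part_mem.2 (mem_of_mem_erase hb)) haQ]
  · rw [eraseParts_parts, eraseParts_parts]
    exact image_congr fun a ha => h a (mem_of_mem_erase ha) (ne_of_mem_erase ha)

theorem eq_of_eraseParts_eq_of_part_eq (h : eraseParts P.parts x = eraseParts Q.parts x)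
    (hx : P.part x = Q.part x) : P = Q := by
  refine ext_part fun a ha => ?_
  obtain rfl | hax := eq_or_ne a x
  · exact hx
  have hxa : ∀ R : Finpartition S, x ∈ R.part a ↔ a ∈ R.part x := fun R => by
    simp only [R.mem_part_iff_exists, and_comm]
  ext b
  obtain rfl | hbx := eq_or_ne b x
  · rw [hxa, hxa, hx]
  · simpa [hbx] using congrArg (b ∈ ·) (eraseParts_eq_iff.1 h a ha hax)

theorem erase_nonempty_iff {t : Finset α} (ht : t ∈ P.parts) : (t.erase x).Nonempty ↔ t ≠ {x} := by
  rw [nonempty_iff_ne_empty, Ne, erase_eq_empty_iff, not_or]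
  exact and_iff_right (P.ne_empty ht)

theorem erase_injOn_parts_erase_singleton (P : Finpartition S) (x : α) :
    Set.InjOn (fun t => t.erase x) (P.parts.erase {x} : Set (Finset α)) := by
  intro t ht t' ht' htt'
  obtain ⟨htx, ht⟩ := mem_erase.1 ht
  obtain ⟨-, ht'⟩ := mem_erase.1 ht'
  simp only at htt'
  obtain ⟨a, ha⟩ := (erase_nonempty_iff ht).2 htx
  exact P.eq_of_mem_parts ht ht' (mem_of_mem_erase ha)
    (mem_of_mem_erase (show a ∈ t'.erase x from htt' ▸ ha))

theorem card_eraseParts (P : Finpartition S) (x : α) :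
    #(eraseParts P.parts x) = #(P.parts.erase {x}) := by
  have hfilter : P.parts.filter (fun t => (t.erase x).Nonempty) = P.parts.erase {x} :=
    (filter_congr fun _ ht => erase_nonempty_iff ht).trans (filter_ne' _ _)
  rw [eraseParts, filter_image, hfilter,
    card_image_of_injOn (erase_injOn_parts_erase_singleton P x)]

theorem singleton_mem_parts_iff_of_eraseParts_eq (hc : #P.parts = #Q.parts)
    (h : eraseParts P.parts x = eraseParts Q.parts x) : {x} ∈ P.parts ↔ {x} ∈ Q.parts := by
  have hcard := card_eraseParts P x
  rw [h, card_eraseParts, card_erase_eq_ite, card_erase_eq_ite] at hcard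
  have hP : {x} ∈ P.parts → 0 < #P.parts := fun h => card_pos.2 ⟨_, h⟩
  have hQ : {x} ∈ Q.parts → 0 < #Q.parts := fun h => card_pos.2 ⟨_, h⟩
  split_ifs at hcard <;> grind

/-- Move `x` from its part into the part `T`: every part loses `x`, and `T` gains it. -/
def move (P : Finpartition S) (hx : x ∈ S) (hT : T ∈ P.parts) (hxs : {x} ∉ P.parts) :
    Finpartition S :=
  ofExistsUnique (P.parts.image fun t => if t = T then insert x t else t.erase x)
    (by
      simp only [mem_image, forall_exists_index, and_imp, forall_apply_eq_imp_iff₂]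
      intro t ht
      split_ifs with htT
      · exact insert_subset hx (P.le ht)
      · exact (erase_subset _ _).trans (P.le ht))
    (by
      intro a ha
      have howner : ∀ t ∈ P.parts, (a = x ∧ t = T ∨ a ≠ x ∧ a ∈ t) ↔
          t = if a = x then T else P.part a := by
        intro t ht
        split_ifs with hax
        · simp [hax]
        · simp only [hax, false_and, false_or, ne_eq, not_false_eq_true, true_and]
          rw [eq_comm, P.part_eq_iff_mem ht]
      have howner_mem : (if a = x then T else P.part a) ∈ P.parts := by
        split_ifs
        exacts [hT, P.part_mem.2 ha]
      refine ⟨_, ⟨mem_image_of_mem _ howner_mem,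
        mem_ite_insert_erase.2 ((howner _ howner_mem).2 rfl)⟩, ?_⟩
      rintro u ⟨hu, hau⟩
      obtain ⟨t, ht, rfl⟩ := mem_image.1 hu
      rw [(howner t ht).1 (mem_ite_insert_erase.1 hau)])
    (by
      simp only [mem_image, not_exists, not_and]
      intro t ht
      split_ifs with htT
      · exact (insert_nonempty x t).ne_empty
      · exact nonempty_iff_ne_empty.1 ((erase_nonempty_iff ht).2 fun h => hxs (h ▸ ht)))

section Move

variable (hx : x ∈ S) (hT : T ∈ P.parts) (hxs : {x} ∉ P.parts)

theorem part_move_self : (P.move hx hT hxs).part x = insert x T :=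
  part_eq_of_mem _ (mem_image.2 ⟨T, hT, if_pos rfl⟩) (mem_insert_self x T)

theorem part_move_of_ne {a : α} (ha : a ∈ S) (hax : a ≠ x) :
    (P.move hx hT hxs).part a =
      if P.part a = T then insert x (P.part a) else (P.part a).erase x :=
  part_eq_of_mem _ (mem_image_of_mem _ (P.part_mem.2 ha))
    (mem_ite_insert_erase.2 (Or.inr ⟨hax, P.mem_part ha⟩))

theorem eraseParts_move : eraseParts (P.move hx hT hxs).parts x = eraseParts P.parts x :=
  eraseParts_eq_iff.2 fun a ha hax => by
    rw [part_move_of_ne hx hT hxs ha hax]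
    split_ifs
    · exact erase_insert_eq_erase _ _
    · exact erase_idem

theorem card_move_parts : #(P.move hx hT hxs).parts = #P.parts := by
  refine card_image_of_injOn fun t ht t' ht' htt' => ?_
  have hne : ∀ t : Finset α, insert x T ≠ t.erase x := fun t h =>
    notMem_erase x t (h ▸ mem_insert_self x T)
  split_ifs at htt' with h h' h'
  · exact h.trans h'.symm
  · subst h
    exact absurd htt' (hne t')
  · subst h'
    exact absurd htt'.symm (hne t)
  · exact erase_injOn_parts_erase_singleton P x (mem_erase.2 ⟨fun h => hxs (h ▸ ht), ht⟩)
      (mem_erase.2 ⟨fun h => hxs (h ▸ ht'), ht'⟩) htt'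

theorem move_ne (hxT : x ∉ T) : P.move hx hT hxs ≠ P := by
  intro h
  have hpart := part_move_self hx hT hxs
  rw [h] at hpart
  obtain ⟨c, hc⟩ := P.nonempty_of_mem_parts hT
  have hTx : T = P.part x :=
    P.eq_of_mem_parts hT (P.part_mem.2 hx) hc (hpart ▸ mem_insert_of_mem hc)
  exact hxT (hTx ▸ P.mem_part hx)

theorem eq_of_eraseParts_eq_move (hxT : x ∉ T) {y : α} (hy : y ∈ S)
    (h : eraseParts P.parts y = eraseParts (P.move hx hT hxs).parts y) : y = x := by
  by_contra hyx
  have hagree := eraseParts_eq_iff.1 h x hx (Ne.symm hyx)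
  rw [part_move_self] at hagree
  have hdisj : Disjoint T (P.part x) :=
    P.disjoint hT (P.part_mem.2 hx) fun h => hxT (h ▸ P.mem_part hx)
  obtain ⟨u, hu⟩ :=
    (erase_nonempty_iff (P.part_mem.2 hx)).2 fun h => hxs (h ▸ P.part_mem.2 hx)
  obtain ⟨hux, huP⟩ := mem_erase.1 hu
  obtain rfl | huy := eq_or_ne u y
  · obtain ⟨t, ht⟩ := P.nonempty_of_mem_parts hT
    have hty : t ≠ u := fun htu => disjoint_left.1 hdisj ht (htu ▸ huP)
    have htP : t ∈ (P.part x).erase u := hagree ▸ mem_erase.2 ⟨hty, mem_insert_of_mem ht⟩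
    exact disjoint_left.1 hdisj ht (mem_of_mem_erase htP)
  · have huT : u ∈ (insert x T).erase y := hagree ▸ mem_erase.2 ⟨huy, huP⟩
    have huT : u ∈ T := (mem_insert.1 (mem_of_mem_erase huT)).resolve_left hux
    exact disjoint_left.1 hdisj huT huP

theorem move_inj {y : α} {U : Finset α} (hy : y ∈ S) (hU : U ∈ P.parts) (hys : {y} ∉ P.parts)
    (hxT : x ∉ T) (hyU : y ∉ U) (h : P.move hx hT hxs = P.move hy hU hys) : x = y ∧ T = U := by
  obtain rfl : x = y :=
    eq_of_eraseParts_eq_move hy hU hys hyU hx (by rw [← h, eraseParts_move])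
  have hTU : insert x T = insert x U := by rw [← part_move_self hx hT hxs, h, part_move_self]
  exact ⟨rfl, by rw [← erase_insert hxT, hTU, erase_insert hyU]⟩

end Move

theorem exists_eq_move (hc : #P.parts = #Q.parts) (hne : P ≠ Q) (hx : x ∈ S)
    (h : eraseParts P.parts x = eraseParts Q.parts x) :
    ∃ (hxs : {x} ∉ P.parts) (T : Finset α) (hT : T ∈ P.parts), x ∉ T ∧ Q = P.move hx hT hxs := by
  have hsingle := singleton_mem_parts_iff_of_eraseParts_eq hc h
  have hxs : {x} ∉ P.parts := fun hP => hne <| eq_of_eraseParts_eq_of_part_eq h <| by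
    rw [P.part_eq_of_mem hP (mem_singleton_self x),
      Q.part_eq_of_mem (hsingle.1 hP) (mem_singleton_self x)]
  obtain ⟨a, ha⟩ :=
    (erase_nonempty_iff (Q.part_mem.2 hx)).2 fun h' => hxs (hsingle.2 (h' ▸ Q.part_mem.2 hx))
  obtain ⟨hax, haQ⟩ := mem_erase.1 ha
  have haS : a ∈ S := Q.part_subset x haQ
  have hPa : (P.part a).erase x = (Q.part x).erase x := by
    rw [eraseParts_eq_iff.1 h a haS hax, Q.part_eq_of_mem (Q.part_mem.2 hx) haQ]
  have hxPa : x ∉ P.part a := fun hxa => hne <| eq_of_eraseParts_eq_of_part_eq h <| by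
    rw [P.part_eq_of_mem (P.part_mem.2 haS) hxa, ← insert_erase hxa,
      ← insert_erase (Q.mem_part hx), hPa]
  rw [erase_eq_of_notMem hxPa] at hPa
  refine ⟨hxs, _, hPa ▸ P.part_mem.2 haS, notMem_erase x _, ?_⟩
  refine eq_of_eraseParts_eq_of_part_eq (h.symm.trans (eraseParts_move ..).symm) ?_
  rw [part_move_self, insert_erase (Q.mem_part hx)]

def isolated (P : Finpartition S) : Finset α := S.filter fun x => {x} ∈ P.parts

theorem mem_sdiff_isolated : x ∈ S \ P.isolated ↔ x ∈ S ∧ {x} ∉ P.parts := by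
  simp only [isolated, mem_sdiff, mem_filter]
  tauto

theorem card_filter_notMem_parts (P : Finpartition S) (hx : x ∈ S) :
    #(P.parts.filter (x ∉ ·)) = #P.parts - 1 := by
  rw [← card_erase_of_mem (P.part_mem.2 hx)]
  congr 1
  ext t
  simp only [mem_filter, mem_erase]
  exact ⟨fun ⟨ht, hxt⟩ => ⟨fun h => hxt (h ▸ P.mem_part hx), ht⟩,
    fun ⟨htx, ht⟩ => ⟨ht, fun hxt => htx (P.part_eq_of_mem ht hxt).symm⟩⟩

theorem isolated_subset : P.isolated ⊆ S := filter_subset _ S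

theorem card_isolated_le (P : Finpartition S) : #P.isolated ≤ #P.parts :=
  card_le_card_of_injOn singleton (fun _ ha => (mem_filter.1 ha).2) singleton_injective.injOn

def disjUnion {s t : Finset α} (P : Finpartition s) (Q : Finpartition t) (h : Disjoint s t) :
    Finpartition (s ∪ t) where
  parts := P.parts ∪ Q.parts
  supIndep := by
    rw [supIndep_iff_pairwiseDisjoint, coe_union]
    exact P.supIndep.pairwiseDisjoint.union Q.supIndep.pairwiseDisjoint
      fun u hu v hv _ => h.mono (P.le hu) (Q.le hv)
  sup_parts := by rw [sup_union, P.sup_parts, Q.sup_parts, sup_eq_union]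
  bot_notMem := by
    rw [mem_union, not_or]
    exact ⟨P.bot_notMem, Q.bot_notMem⟩

theorem card_disjUnion_parts {s t : Finset α} (P : Finpartition s) (Q : Finpartition t)
    (h : Disjoint s t) : #(P.disjUnion Q h).parts = #P.parts + #Q.parts :=
  card_union_of_disjoint <| disjoint_left.2 fun _ hu hu' =>
    P.ne_bot hu (disjoint_self.1 (h.mono (P.le hu) (Q.le hu')))

def extendSingletons (Q : Finpartition (S \ A)) (hA : A ⊆ S) : Finpartition S :=
  (Q.disjUnion ⊥ disjoint_sdiff_self_left).copy (sdiff_union_of_subset hA)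

theorem mem_extendSingletons_parts {Q : Finpartition (S \ A)} {hA : A ⊆ S} {t : Finset α} :
    t ∈ (Q.extendSingletons hA).parts ↔ t ∈ Q.parts ∨ ∃ a ∈ A, {a} = t :=
  mem_union.trans (or_congr Iff.rfl mem_bot_iff)

theorem card_extendSingletons_parts (Q : Finpartition (S \ A)) (hA : A ⊆ S) :
    #(Q.extendSingletons hA).parts = #Q.parts + #A :=
  (card_disjUnion_parts Q ⊥ disjoint_sdiff_self_left).trans (congrArg _ (card_bot A))

theorem isolated_extendSingletons {Q : Finpartition (S \ A)} (hA : A ⊆ S)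
    (hQ : ∀ t ∈ Q.parts, 2 ≤ #t) : (Q.extendSingletons hA).isolated = A := by
  ext x
  simp only [isolated, mem_filter, mem_extendSingletons_parts, singleton_inj, exists_eq_right]
  refine ⟨fun ⟨_, h⟩ => h.resolve_left fun hx => by simpa using hQ _ hx,
    fun hx => ⟨hA hx, Or.inr hx⟩⟩

theorem avoid_extendSingletons (Q : Finpartition (S \ A)) (hA : A ⊆ S) :
    (Q.extendSingletons hA).avoid A = Q := by
  refine Finpartition.ext (Finset.ext fun t => ?_)
  simp only [mem_avoid, mem_extendSingletons_parts]
  constructor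
  · rintro ⟨d, hd | ⟨a, ha, rfl⟩, hdA, rfl⟩
    · rwa [(disjoint_of_subset_left (Q.le hd) disjoint_sdiff_self_left).sdiff_eq_left]
    · exact absurd (singleton_subset_iff.2 ha) hdA
  · intro ht
    have hdisj : Disjoint t A := disjoint_of_subset_left (Q.le ht) disjoint_sdiff_self_left
    refine ⟨t, Or.inl ht, fun htA => Q.ne_empty ht ?_, hdisj.sdiff_eq_left⟩
    exact disjoint_self.1 (hdisj.mono_right htA)

theorem eq_singleton_of_mem_isolated {t : Finset α} {a : α} (ht : t ∈ P.parts) (hat : a ∈ t)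
    (ha : a ∈ P.isolated) : t = {a} :=
  P.eq_of_mem_parts ht (mem_filter.1 ha).2 hat (mem_singleton_self a)

theorem sdiff_isolated_of_mem_parts {t : Finset α} (ht : t ∈ P.parts) (htI : ¬t ⊆ P.isolated) :
    t \ P.isolated = t :=
  sdiff_eq_self_of_disjoint <| disjoint_left.2 fun _ hat ha =>
    htI (eq_singleton_of_mem_isolated ht hat ha ▸ singleton_subset_iff.2 ha)

theorem extendSingletons_avoid_isolated :
    (P.avoid P.isolated).extendSingletons isolated_subset = P := by
  refine Finpartition.ext (Finset.ext fun t => ?_)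
  simp only [mem_extendSingletons_parts, mem_avoid]
  constructor
  · rintro (⟨d, hd, hdI, rfl⟩ | ⟨a, ha, rfl⟩)
    · rwa [sdiff_isolated_of_mem_parts hd hdI]
    · exact (mem_filter.1 ha).2
  · intro ht
    by_cases htI : t ⊆ P.isolated
    · obtain ⟨a, ha⟩ := P.nonempty_of_mem_parts ht
      exact Or.inr ⟨a, htI ha, (eq_singleton_of_mem_isolated ht ha (htI ha)).symm⟩
    · exact Or.inl ⟨t, ht, htI, sdiff_isolated_of_mem_parts ht htI⟩

theorem two_le_card_of_mem_avoid_isolated {t : Finset α} (ht : t ∈ (P.avoid P.isolated).parts) :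
    2 ≤ #t := by
  obtain ⟨d, hd, hdI, rfl⟩ := (mem_avoid _).1 ht
  rw [sdiff_isolated_of_mem_parts hd hdI]
  by_contra hlt
  obtain ⟨a, rfl⟩ := card_eq_one.1 <| show #d = 1 by
    have := card_pos.2 (P.nonempty_of_mem_parts hd)
    omega
  exact hdI (singleton_subset_iff.2 (mem_filter.2 ⟨P.le hd (mem_singleton_self a), hd⟩))

section Image

variable {β : Type*} [DecidableEq β] {s : Finset α} {f : α → β}

def image (P : Finpartition s) (f : α → β) (hf : Set.InjOn f s) : Finpartition (s.image f) :=
  ofExistsUnique (P.parts.image (Finset.image f)) (by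
      simp only [mem_image, forall_exists_index, and_imp, forall_apply_eq_imp_iff₂]
      exact fun t ht => image_subset_image (P.le ht))
    (by
      simp only [mem_image, forall_exists_index, and_imp, forall_apply_eq_imp_iff₂]
      intro a ha
      refine ⟨(P.part a).image f,
        ⟨⟨_, P.part_mem.2 ha, rfl⟩, mem_image_of_mem f (P.mem_part ha)⟩, ?_⟩
      rintro _ ⟨⟨t, ht, rfl⟩, hat⟩
      obtain ⟨b, hbt, hba⟩ := mem_image.1 hat
      rw [← hf (P.le ht hbt) ha hba, P.part_eq_of_mem ht hbt])
    (by simp)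

def preimage (Q : Finpartition (s.image f)) : Finpartition s :=
  ofExistsUnique (Q.parts.image fun u => s.filter (f · ∈ u)) (by simp)
    (by
      simp only [mem_image]
      intro a ha
      have hfa : f a ∈ s.image f := mem_image_of_mem f ha
      refine ⟨_, ⟨⟨_, Q.part_mem.2 hfa, rfl⟩, mem_filter.2 ⟨ha, Q.mem_part hfa⟩⟩, ?_⟩
      rintro _ ⟨⟨u, hu, rfl⟩, hau⟩
      rw [Q.part_eq_of_mem hu (mem_filter.1 hau).2])
    (by
      simp only [mem_image, not_exists, not_and]
      intro u hu hempty
      obtain ⟨b, hb⟩ := Q.nonempty_of_mem_parts hu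
      obtain ⟨a, ha, rfl⟩ := mem_image.1 (Q.le hu hb)
      exact notMem_empty a (hempty ▸ mem_filter.2 ⟨ha, hb⟩))

variable (hf : Set.InjOn f s)
include hf

theorem preimage_image (P : Finpartition s) : (P.image f hf).preimage = P := by
  refine Finpartition.ext ?_
  change (P.parts.image (Finset.image f)).image (fun u => s.filter (f · ∈ u)) = P.parts
  rw [image_image]
  exact (image_congr fun t ht => filter_mem_image_of_injOn hf (P.le ht)).trans image_id'

theorem image_preimage (Q : Finpartition (s.image f)) : Q.preimage.image f hf = Q := by
  refine Finpartition.ext ?_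
  change (Q.parts.image fun u => s.filter (f · ∈ u)).image (Finset.image f) = Q.parts
  rw [image_image]
  exact (image_congr fun u hu => image_filter_mem_of_subset (Q.le hu)).trans image_id'

theorem card_image_parts (P : Finpartition s) : #(P.image f hf).parts = #P.parts :=
  card_image_of_injOn fun t ht t' ht' htt' => by
    rw [← filter_mem_image_of_injOn hf (P.le ht), htt', filter_mem_image_of_injOn hf (P.le ht')]

theorem forall_mem_image_parts_iff (P : Finpartition s) {p : ℕ → Prop} :
    (∀ u ∈ (P.image f hf).parts, p #u) ↔ ∀ t ∈ P.parts, p #t := by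
  simp only [image, ofExistsUnique_parts, forall_mem_image]
  exact forall₂_congr fun t ht => by rw [card_image_of_injOn (hf.mono (P.le ht))]

end Image

end Finpartition

open Finpartition in
theorem card_finpartition_eq_assocStirling2 {α : Type*} [DecidableEq α] (s : Finset α) (y : ℕ) :
    #{P : Finpartition s | #P.parts = y ∧ ∀ t ∈ P.parts, 2 ≤ #t} = assocStirling2 #s y := by
  obtain ⟨f, hf⟩ := s.finite_toSet.exists_bijOn_of_encard_eq (t := (range #s : Set ℕ))
    (by rw [Set.encard_coe_eq_coe_finsetCard, Set.encard_coe_eq_coe_finsetCard, card_range])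
  have himage : s.image f = range #s := coe_injective (by rw [coe_image, hf.image_eq])
  have hcount : ∀ t, s.image f = t →
      #{P : Finpartition s | #P.parts = y ∧ ∀ t ∈ P.parts, 2 ≤ #t} =
        #{Q : Finpartition t | #Q.parts = y ∧ ∀ u ∈ Q.parts, 2 ≤ #u} := by
    rintro _ rfl
    refine card_nbij' (·.image f hf.injOn) preimage (fun P hP => ?_) (fun Q hQ => ?_)
      (fun P _ => preimage_image hf.injOn P) (fun Q _ => image_preimage hf.injOn Q)
    · simpa [card_image_parts, forall_mem_image_parts_iff] using hP
    · rw [← image_preimage hf.injOn Q] at hQ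
      simpa [card_image_parts, forall_mem_image_parts_iff] using hQ
  rw [hcount _ himage, assocStirling2, Set.ncard_eq_toFinset_card', Set.toFinset_ofPred]

theorem assocStirling2_zero_right {m : ℕ} (hm : m ≠ 0) : assocStirling2 m 0 = 0 := by
  rw [← card_range m, ← card_finpartition_eq_assocStirling2, card_eq_zero, filter_eq_empty_iff]
  rintro P - ⟨hP, -⟩
  rw [card_eq_zero, Finpartition.parts_eq_empty_iff] at hP
  exact hm (card_range m ▸ card_eq_zero.2 hP)

section PartitionGraph

open Finpartition

variable {α : Type*} [DecidableEq α] {S : Finset α} {r : ℕ}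

theorem partitionGraph_adj_move {P : Finpartition S} (hP : #P.parts = r) {x : α} {T : Finset α}
    (hx : x ∈ S) (hT : T ∈ P.parts) (hxs : {x} ∉ P.parts) (hxT : x ∉ T) :
    (partitionGraph S r).Adj ⟨P, hP⟩ ⟨P.move hx hT hxs, (card_move_parts hx hT hxs).trans hP⟩ :=
  ⟨fun h => move_ne hx hT hxs hxT (congrArg Subtype.val h).symm, x,
    ⟨hx, (eraseParts_move hx hT hxs).symm⟩,
    fun _ hy => eq_of_eraseParts_eq_move hx hT hxs hxT hy.1 hy.2⟩

theorem partitionGraph_degree [DecidableRel (partitionGraph S r).Adj]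
    (v : {P : Finpartition S // #P.parts = r}) :
    (partitionGraph S r).degree v = #(S \ v.1.isolated) * (r - 1) := by
  obtain ⟨P, hP⟩ := v
  have hpairs : #((partitionGraph S r).neighborFinset ⟨P, hP⟩) =
      #((S \ P.isolated).sigma fun x => P.parts.filter (x ∉ ·)) := by
    refine (card_bij (fun p hp => ⟨P.move (mem_sdiff_isolated.1 (mem_sigma.1 hp).1).1
        (mem_filter.1 (mem_sigma.1 hp).2).1 (mem_sdiff_isolated.1 (mem_sigma.1 hp).1).2,
        (card_move_parts ..).trans hP⟩) (fun p hp => ?_) (fun p hp q hq hpq => ?_)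
      (fun Q hQ => ?_)).symm
    · exact (SimpleGraph.mem_neighborFinset ..).2
        (partitionGraph_adj_move hP _ _ _ (mem_filter.1 (mem_sigma.1 hp).2).2)
    · obtain ⟨x, T⟩ := p
      obtain ⟨y, U⟩ := q
      simp only [mem_sigma, mem_sdiff_isolated, mem_filter] at hp hq
      obtain ⟨⟨hx, hxs⟩, hT, hxT⟩ := hp
      obtain ⟨⟨hy, hys⟩, hU, hyU⟩ := hq
      obtain ⟨rfl, rfl⟩ := move_inj hx hT hxs hy hU hys hxT hyU (congrArg Subtype.val hpq)
      rfl
    · obtain ⟨hne, x, ⟨hx, hE⟩, -⟩ := (SimpleGraph.mem_neighborFinset ..).1 hQ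
      obtain ⟨hxs, T, hT, hxT, hQ⟩ :=
        exists_eq_move (hP.trans Q.2.symm) (fun h => hne (Subtype.ext h)) hx hE
      exact ⟨⟨x, T⟩, mem_sigma.2 ⟨mem_sdiff_isolated.2 ⟨hx, hxs⟩, mem_filter.2 ⟨hT, hxT⟩⟩,
        Subtype.ext hQ.symm⟩
  rw [← SimpleGraph.card_neighborFinset_eq_degree, hpairs, card_sigma,
    sum_congr rfl fun x hx => card_filter_notMem_parts P (mem_sdiff.1 hx).1, sum_const,
    smul_eq_mul, hP]

theorem card_filter_isolated_eq {A : Finset α} (hA : A ⊆ S) (hAr : #A ≤ r) :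
    #{v : {P : Finpartition S // #P.parts = r} | v.1.isolated = A} =
      assocStirling2 (#S - #A) (r - #A) := by
  rw [← card_sdiff_of_subset hA, ← card_finpartition_eq_assocStirling2]
  refine card_bij' (fun v _ => v.1.avoid A)
    (fun Q hQ => ⟨Q.extendSingletons hA, by
      rw [card_extendSingletons_parts, (mem_filter.1 hQ).2.1]
      omega⟩) (fun ⟨P, hP⟩ hv => ?_) (fun Q hQ => ?_) (fun ⟨P, hP⟩ hv => ?_)
    (fun Q _ => avoid_extendSingletons Q hA)
  · obtain rfl := (mem_filter.1 hv).2
    have hcard := card_extendSingletons_parts (P.avoid P.isolated) isolated_subset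
    rw [extendSingletons_avoid_isolated] at hcard
    refine mem_filter.2 ⟨mem_univ _, ?_, fun t => two_le_card_of_mem_avoid_isolated⟩
    dsimp only
    omega
  · exact mem_filter.2 ⟨mem_univ _, isolated_extendSingletons hA (mem_filter.1 hQ).2.2⟩
  · obtain rfl := (mem_filter.1 hv).2
    exact Subtype.ext extendSingletons_avoid_isolated

theorem card_filter_card_isolated_eq {j : ℕ} (hj : j ≤ r) :
    #{v : {P : Finpartition S // #P.parts = r} | #v.1.isolated = j} =
      (#S).choose j * assocStirling2 (#S - j) (r - j) := by
  calc #{v : {P : Finpartition S // #P.parts = r} | #v.1.isolated = j}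
      = ∑ A ∈ S.powersetCard j, #{v : {P : Finpartition S // #P.parts = r} | v.1.isolated = A} := by
        rw [sum_card_fiberwise_eq_card_filter]
        simp only [mem_powersetCard, isolated_subset, true_and]
    _ = ∑ A ∈ S.powersetCard j, assocStirling2 (#S - j) (r - j) :=
        sum_congr rfl fun A hA => by
          obtain ⟨hAS, rfl⟩ := mem_powersetCard.1 hA
          exact card_filter_isolated_eq hAS hj
    _ = _ := by rw [sum_const, card_powersetCard, smul_eq_mul]

theorem two_mul_card_edgeFinset_partitionGraph [DecidableRel (partitionGraph S r).Adj] :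
    2 * #(partitionGraph S r).edgeFinset =
      ∑ k ∈ range r, (#S).choose k * assocStirling2 (#S - k) (r - k) * (#S - k) * (r - 1) := by
  have hmaps : ∀ v ∈ (univ : Finset {P : Finpartition S // #P.parts = r}),
      #v.1.isolated ∈ range (r + 1) := fun v _ =>
    mem_range_succ_iff.2 (v.1.card_isolated_le.trans_eq v.2)
  have hlast : assocStirling2 (#S - r) 0 * (#S - r) = 0 := by
    obtain h | h := eq_or_ne (#S - r) 0
    · rw [h, mul_zero]
    · rw [assocStirling2_zero_right h, zero_mul]
  calc 2 * #(partitionGraph S r).edgeFinset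
      = ∑ v : {P : Finpartition S // #P.parts = r}, (#S - #v.1.isolated) * (r - 1) := by
        rw [← SimpleGraph.sum_degrees_eq_twice_card_edges]
        exact sum_congr rfl fun v _ => by
          rw [partitionGraph_degree, card_sdiff_of_subset isolated_subset]
    _ = ∑ k ∈ range (r + 1), #{v : {P : Finpartition S // #P.parts = r} | #v.1.isolated = k} *
          ((#S - k) * (r - 1)) := by
        rw [← sum_fiberwise_of_maps_to' hmaps fun k => (#S - k) * (r - 1)]
        exact sum_congr rfl fun k _ => by rw [sum_const, smul_eq_mul]
    _ = ∑ k ∈ range (r + 1),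
          (#S).choose k * assocStirling2 (#S - k) (r - k) * (#S - k) * (r - 1) :=
        sum_congr rfl fun k hk => by
          rw [card_filter_card_isolated_eq (mem_range_succ_iff.1 hk)]
          ring
    _ = _ := by
        rw [sum_range_succ, Nat.sub_self, mul_assoc _ (assocStirling2 _ 0), hlast]
        simp

end PartitionGraph

theorem partitionGraph_edge_count_general {α : Type*} [DecidableEq α] (S : Finset α) (n r : ℕ)
    (hn : S.card = n) :
    ((partitionGraph S r).edgeSet.ncard : ℝ) =
      (1 / 2) * ∑ k ∈ Finset.range r,
        (n.choose k : ℝ) * (assocStirling2 (n - k) (r - k) : ℝ) *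
          ((n - k : ℕ) : ℝ) * ((r - 1 : ℕ) : ℝ) := by
  classical
  subst hn
  have hcount : (2 * #(partitionGraph S r).edgeFinset : ℝ) =
      ∑ k ∈ range r, ((#S).choose k : ℝ) * (assocStirling2 (#S - k) (r - k) : ℝ) *
        ((#S - k : ℕ) : ℝ) * ((r - 1 : ℕ) : ℝ) := by
    exact_mod_cast two_mul_card_edgeFinset_partitionGraph
  rw [← SimpleGraph.coe_edgeFinset, Set.ncard_coe_finset, ← hcount]
  ring

/-- Edge count of the `r`-partition graph: if `r ≤ n/2` then
`|E(G[S,r])| = (1/2) Σ_{k=0}^{r-1} C(n,k) S₂(n-k, r-k) (n-k)(r-1)`. -/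
theorem partitionGraph_edge_count {α : Type*} [DecidableEq α] (S : Finset α) (n r : ℕ)
    (hn : S.card = n) (hr : 0 < r) (hrn : 2 * r ≤ n) :
    ((partitionGraph S r).edgeSet.ncard : ℝ) =
      (1 / 2) * ∑ k ∈ Finset.range r,
        (n.choose k : ℝ) * (assocStirling2 (n - k) (r - k) : ℝ) *
          ((n - k : ℕ) : ℝ) * ((r - 1 : ℕ) : ℝ) :=
  partitionGraph_edge_count_general S n r hn
end
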